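/- arXiv:0709.1774 — 4 statements merged into one kernel-verified Lean document; each statement's English description precedes it below -/
import Mathlib

section
/- Let m ≥ 1, let W ⊆ ℝ^{m+1} be compact with interior W° and topological boundary ∂W := W ∖ W°, let E be a Hausdorff topological space, and let Y ⊆ ∂W × E be compact. Define Z̃ := closure in W × S^m × Y of the set {(v, x, (w,e)) ∈ W × S^m × Y : v ≠ w and x = (w − v)/|w − v|}, and Z₀ := Z̃ ∩ (∂W × S^m × Y). Then the projection (v, x, (w,e)) ↦ (v, (w,e)) restricts to a homeomorphism from Z̃ ∖ Z₀ onto W° × Y. -/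
/-!
On the closure of the set of secants the identity `‖w - v‖ • x = w - v` persists.
Off `Z₀` the base point `v` lies in `W°` while `w ∈ ∂W`, so `v ≠ w` and the identity
pins down `x = (w - v) / ‖w - v‖`. Hence `Z̃ ∖ Z₀` is the graph over `W° × Y` of a
continuous map, and projecting a graph onto its domain is a homeomorphism.
-/

open Set

section Graph

variable {α β γ : Type*} [TopologicalSpace α] [TopologicalSpace β] [TopologicalSpace γ]

def graphHomeomorph (s : Set (α × γ)) (g : α × γ → β) (hg : ContinuousOn g s) :
    {p : α × β × γ | (p.1, p.2.2) ∈ s ∧ p.2.1 = g (p.1, p.2.2)} ≃ₜ s where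
  toFun p := ⟨(p.1.1, p.1.2.2), p.2.1⟩
  invFun q := ⟨(q.1.1, g q, q.1.2), q.2, rfl⟩
  left_inv p := Subtype.ext (Prod.ext rfl (Prod.ext p.2.2.symm rfl))
  right_inv _ := rfl
  continuous_toFun := by fun_prop
  continuous_invFun := by
    refine .subtype_mk (.prodMk (by fun_prop) (.prodMk ?_ (by fun_prop))) _
    exact hg.comp_continuous continuous_subtype_val Subtype.prop

end Graph

theorem sub_ne_zero_of_mem_interior {V E : Type*} [AddGroup V] [TopologicalSpace V]
    {W : Set V} {Y : Set (V × E)} (hY : ∀ y ∈ Y, y.1 ∉ interior W) {v : V} {y : V × E}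
    (hv : v ∈ interior W) (hy : y ∈ Y) : y.1 - v ≠ 0 :=
  sub_ne_zero.2 fun h ↦ hY y hy (h ▸ hv)

section Normalize

variable {V : Type*} [NormedAddCommGroup V] [NormedSpace ℝ V]

theorem NormedSpace.continuousAt_normalize {x : V} (hx : x ≠ 0) :
    ContinuousAt NormedSpace.normalize x :=
  (continuous_norm.continuousAt.inv₀ (norm_ne_zero_iff.2 hx)).smul continuousAt_id

theorem NormedSpace.eq_normalize_of_norm_smul_eq {x y : V} (hx : x ≠ 0) (h : ‖x‖ • y = x) :
    y = NormedSpace.normalize x := by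
  rw [NormedSpace.normalize, eq_inv_smul_iff₀ (norm_ne_zero_iff.2 hx), h]

end Normalize

section Secants

variable {V E : Type*} [NormedAddCommGroup V] [NormedSpace ℝ V] [TopologicalSpace E]
  (W : Set V) (Y : Set (V × E))

def secants : Set (V × V × (V × E)) :=
  {p | p.1 ∈ W ∧ p.2.1 ∈ Metric.sphere 0 1 ∧ p.2.2 ∈ Y ∧ p.1 ≠ p.2.2.1 ∧
    p.2.1 = NormedSpace.normalize (p.2.2.1 - p.1)}

def secantClosure : Set (V × V × (V × E)) :=
  closure (secants W Y) ∩ {p | p.1 ∈ W ∧ p.2.1 ∈ Metric.sphere 0 1 ∧ p.2.2 ∈ Y}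

variable {W Y}

theorem norm_smul_eq_sub_of_mem_closure_secants {p : V × V × (V × E)}
    (hp : p ∈ closure (secants W Y)) : ‖p.2.2.1 - p.1‖ • p.2.1 = p.2.2.1 - p.1 := by
  have h : EqOn (fun p : V × V × (V × E) ↦ ‖p.2.2.1 - p.1‖ • p.2.1)
      (fun p ↦ p.2.2.1 - p.1) (secants W Y) := by
    rintro p ⟨-, -, -, -, hx⟩
    simp only [hx, NormedSpace.norm_smul_normalize]
  exact h.closure (by fun_prop) (by fun_prop) hp

theorem secantClosure_diff_eq_graph (hY : ∀ y ∈ Y, y.1 ∉ interior W) :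
    secantClosure W Y \ (secantClosure W Y ∩ {p | p.1 ∈ W \ interior W}) =
      {p | (p.1, p.2.2) ∈ interior W ×ˢ Y ∧
        p.2.1 = NormedSpace.normalize (p.2.2.1 - p.1)} := by
  ext p
  constructor
  · rintro ⟨⟨hcl, hW, hS, hpY⟩, hnot⟩
    have hint : p.1 ∈ interior W := by_contra fun h ↦ hnot ⟨⟨hcl, hW, hS, hpY⟩, hW, h⟩
    exact ⟨⟨hint, hpY⟩, NormedSpace.eq_normalize_of_norm_smul_eq
      (sub_ne_zero_of_mem_interior hY hint hpY) (norm_smul_eq_sub_of_mem_closure_secants hcl)⟩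
  · rintro ⟨⟨hint, hpY⟩, hx⟩
    have hne := sub_ne_zero_of_mem_interior hY hint hpY
    have hsec : p ∈ secants W Y :=
      ⟨interior_subset hint, by rw [hx, mem_sphere_zero_iff_norm, NormedSpace.norm_normalize hne],
        hpY, fun h ↦ hne (by rw [h, sub_self]), hx⟩
    exact ⟨⟨subset_closure hsec, hsec.1, hsec.2.1, hpY⟩, fun h ↦ h.2.2 hint⟩

theorem continuousOn_normalize_sub (hY : ∀ y ∈ Y, y.1 ∉ interior W) :
    ContinuousOn (fun q : V × (V × E) ↦ NormedSpace.normalize (q.2.1 - q.1))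
      (interior W ×ˢ Y) := by
  rintro ⟨v, y⟩ ⟨hv, hy⟩
  have hne := sub_ne_zero_of_mem_interior hY hv hy
  exact ((NormedSpace.continuousAt_normalize hne).comp (x := (v, y))
    (f := fun q : V × (V × E) ↦ q.2.1 - q.1) (by fun_prop)).continuousWithinAt

end Secants

theorem stmt3_general (m : ℕ)
    (E : Type*) [TopologicalSpace E]
    (W : Set (EuclideanSpace ℝ (Fin (m + 1))))
    (Y : Set (EuclideanSpace ℝ (Fin (m + 1)) × E))
    (hYsub : Y ⊆ (W \ interior W) ×ˢ (Set.univ : Set E))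
    (S₁ Ztil Z₀ : Set (EuclideanSpace ℝ (Fin (m + 1)) ×
      EuclideanSpace ℝ (Fin (m + 1)) × (EuclideanSpace ℝ (Fin (m + 1)) × E)))
    (hS₁ : S₁ = {p | p.1 ∈ W ∧
      p.2.1 ∈ Metric.sphere (0 : EuclideanSpace ℝ (Fin (m + 1))) 1 ∧
      p.2.2 ∈ Y ∧ p.1 ≠ p.2.2.1 ∧
      p.2.1 = ‖p.2.2.1 - p.1‖⁻¹ • (p.2.2.1 - p.1)})
    (hZtil : Ztil = closure S₁ ∩
      {p | p.1 ∈ W ∧ p.2.1 ∈ Metric.sphere (0 : EuclideanSpace ℝ (Fin (m + 1))) 1 ∧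
        p.2.2 ∈ Y})
    (hZ₀ : Z₀ = Ztil ∩ {p | p.1 ∈ W \ interior W}) :
    ∃ h : ↥(Ztil \ Z₀) ≃ₜ ↥((interior W) ×ˢ Y),
      ∀ p : ↥(Ztil \ Z₀),
        (h p : EuclideanSpace ℝ (Fin (m + 1)) × (EuclideanSpace ℝ (Fin (m + 1)) × E)) =
          ((p : EuclideanSpace ℝ (Fin (m + 1)) ×
            EuclideanSpace ℝ (Fin (m + 1)) × (EuclideanSpace ℝ (Fin (m + 1)) × E)).1,
           (p : EuclideanSpace ℝ (Fin (m + 1)) ×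
            EuclideanSpace ℝ (Fin (m + 1)) × (EuclideanSpace ℝ (Fin (m + 1)) × E)).2.2) := by
  subst hS₁ hZtil hZ₀
  have hY : ∀ y ∈ Y, y.1 ∉ interior W := fun y hy ↦ (hYsub hy).1.2
  exact ⟨(Homeomorph.setCongr (secantClosure_diff_eq_graph hY)).trans
    (graphHomeomorph _ _ (continuousOn_normalize_sub hY)), fun _ ↦ rfl⟩

/-- With `Z̃` the closure in `W × S^m × Y` of
`{(v,x,(w,e)) : v ≠ w, x = (w - v)/‖w - v‖}` and `Z₀ := Z̃ ∩ (∂W × S^m × Y)`,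
the projection `(v,x,(w,e)) ↦ (v,(w,e))` restricts to a homeomorphism
`Z̃ ∖ Z₀ ≃ₜ W° × Y`. -/
theorem stmt3 (m : ℕ) (hm : 1 ≤ m)
    (E : Type*) [TopologicalSpace E] [T2Space E]
    (W : Set (EuclideanSpace ℝ (Fin (m + 1))))
    (hWcpt : IsCompact W)
    (Y : Set (EuclideanSpace ℝ (Fin (m + 1)) × E))
    (hYcpt : IsCompact Y)
    (hYsub : Y ⊆ (W \ interior W) ×ˢ (Set.univ : Set E))
    (S₁ Ztil Z₀ : Set (EuclideanSpace ℝ (Fin (m + 1)) ×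
      EuclideanSpace ℝ (Fin (m + 1)) × (EuclideanSpace ℝ (Fin (m + 1)) × E)))
    (hS₁ : S₁ = {p | p.1 ∈ W ∧
      p.2.1 ∈ Metric.sphere (0 : EuclideanSpace ℝ (Fin (m + 1))) 1 ∧
      p.2.2 ∈ Y ∧ p.1 ≠ p.2.2.1 ∧
      p.2.1 = ‖p.2.2.1 - p.1‖⁻¹ • (p.2.2.1 - p.1)})
    (hZtil : Ztil = closure S₁ ∩
      {p | p.1 ∈ W ∧ p.2.1 ∈ Metric.sphere (0 : EuclideanSpace ℝ (Fin (m + 1))) 1 ∧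
        p.2.2 ∈ Y})
    (hZ₀ : Z₀ = Ztil ∩ {p | p.1 ∈ W \ interior W}) :
    ∃ h : ↥(Ztil \ Z₀) ≃ₜ ↥((interior W) ×ˢ Y),
      ∀ p : ↥(Ztil \ Z₀),
        (h p : EuclideanSpace ℝ (Fin (m + 1)) × (EuclideanSpace ℝ (Fin (m + 1)) × E)) =
          ((p : EuclideanSpace ℝ (Fin (m + 1)) ×
            EuclideanSpace ℝ (Fin (m + 1)) × (EuclideanSpace ℝ (Fin (m + 1)) × E)).1,
           (p : EuclideanSpace ℝ (Fin (m + 1)) ×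
            EuclideanSpace ℝ (Fin (m + 1)) × (EuclideanSpace ℝ (Fin (m + 1)) × E)).2.2) :=
  stmt3_general m E W Y hYsub S₁ Ztil Z₀ hS₁ hZtil hZ₀
end

section
/- Let m ≥ 1, let W ⊆ ℝ^{m+1} be compact with interior W° and topological boundary ∂W := W ∖ W°, and let D ⊆ W° be a compact set. Define V := closure in W × S^m × ∂W of the set {(v, x, w) ∈ W × S^m × ∂W : v ≠ w and x = (w − v)/|w − v|}, and let p : V → W × ∂W be the projection (v,x,w) ↦ (v,w). Then the restriction of p to p^{-1}(D × ∂W) is a homeomorphism onto D × ∂W. -/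
/-!
Since `D ⊆ W°`, `v ≠ w` on `D × ∂W`, so there the unit vector
`(w - v)/‖w - v‖` depends continuously on `(v, w)`. Hence `V` contains its graph, and since
`V` is the closure of that graph, over `D × ∂W` it is nothing more: `p` is inverted by
`(v, w) ↦ (v, (w - v)/‖w - v‖, w)`.
-/

open Filter Topology

section Closure

variable {X Y : Type*} [TopologicalSpace X] [TopologicalSpace Y] [T2Space Y]

theorem eq_of_mem_closure_of_eqOn {f g : X → Y} {s : Set X} (hfg : Set.EqOn f g s) {x : X}
    (hx : x ∈ closure s) (hf : ContinuousAt f x) (hg : ContinuousAt g x) : f x = g x := by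
  have : (𝓝[s] x).NeBot := mem_closure_iff_nhdsWithin_neBot.1 hx
  exact tendsto_nhds_unique_of_frequently_eq (hf.mono_left nhdsWithin_le_nhds)
    (hg.mono_left nhdsWithin_le_nhds) (eventually_nhdsWithin_of_forall hfg).frequently

end Closure

section Graph

variable {X Y Z : Type*} [TopologicalSpace X] [TopologicalSpace Y] [TopologicalSpace Z]

theorem exists_homeomorph_of_isGraph {T : Set (X × Y × Z)} {B : Set (X × Z)} {f : X × Z → Y}
    (hf : ContinuousOn f B) (hT : ∀ p ∈ T, (p.1, p.2.2) ∈ B ∧ p.2.1 = f (p.1, p.2.2))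
    (hB : ∀ q ∈ B, (q.1, f q, q.2) ∈ T) :
    ∃ h : T ≃ₜ B, ∀ p : T, (h p : X × Z) = ((p : X × Y × Z).1, (p : X × Y × Z).2.2) := by
  refine ⟨⟨⟨fun p => ⟨(p.1.1, p.1.2.2), (hT p.1 p.2).1⟩,
    fun q => ⟨(q.1.1, f q.1, q.1.2), hB q.1 q.2⟩, ?_, fun _ => rfl⟩, ?_, ?_⟩, fun _ => rfl⟩
  · rintro ⟨p, hp⟩
    exact Subtype.ext (Prod.ext rfl (Prod.ext (hT p hp).2.symm rfl))
  · fun_prop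
  · have : Continuous fun q : B => f q := hf.domRestrict
    exact (continuous_subtype_val.fst.prodMk (this.prodMk continuous_subtype_val.snd)).subtype_mk _

end Graph

section Direction

variable {E : Type*} [NormedAddCommGroup E] [NormedSpace ℝ E]

/-- Junk value `0` when `q.1 = q.2`. -/
noncomputable def unitDirection (q : E × E) : E := ‖q.2 - q.1‖⁻¹ • (q.2 - q.1)

theorem continuousAt_unitDirection {v w : E} (hvw : v ≠ w) :
    ContinuousAt unitDirection (v, w) := by
  have hsub : Continuous fun q : E × E => q.2 - q.1 := continuous_snd.sub continuous_fst
  exact (hsub.continuousAt.norm.inv₀ (by simpa [sub_eq_zero] using hvw.symm)).smul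
    hsub.continuousAt

theorem ContinuousAt.unitDirection {α : Type*} [TopologicalSpace α] {f g : α → E} {a : α}
    (hf : ContinuousAt f a) (hg : ContinuousAt g a) (hfg : f a ≠ g a) :
    ContinuousAt (fun x => unitDirection (f x, g x)) a :=
  ContinuousAt.comp (f := fun x => (f x, g x)) (continuousAt_unitDirection hfg) (hf.prodMk hg)

theorem norm_unitDirection {v w : E} (hvw : v ≠ w) : ‖unitDirection (v, w)‖ = 1 := by
  have : ‖w - v‖ ≠ 0 := norm_ne_zero_iff.2 (sub_ne_zero.2 hvw.symm)
  simp [unitDirection, norm_smul, this]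

end Direction

theorem stmt5_general (m : ℕ)
    (W : Set (EuclideanSpace ℝ (Fin (m + 1))))
    (D : Set (EuclideanSpace ℝ (Fin (m + 1))))
    (hD : D ⊆ interior W)
    (S₁ V : Set (EuclideanSpace ℝ (Fin (m + 1)) ×
      EuclideanSpace ℝ (Fin (m + 1)) × EuclideanSpace ℝ (Fin (m + 1))))
    (hS₁ : S₁ = {p | p.1 ∈ W ∧
      p.2.1 ∈ Metric.sphere (0 : EuclideanSpace ℝ (Fin (m + 1))) 1 ∧
      p.2.2 ∈ W \ interior W ∧ p.1 ≠ p.2.2 ∧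
      p.2.1 = ‖p.2.2 - p.1‖⁻¹ • (p.2.2 - p.1)})
    (hV : V = closure S₁ ∩
      {p | p.1 ∈ W ∧ p.2.1 ∈ Metric.sphere (0 : EuclideanSpace ℝ (Fin (m + 1))) 1 ∧
        p.2.2 ∈ W \ interior W}) :
    ∃ h : ↥(V ∩ {p | (p.1, p.2.2) ∈ D ×ˢ (W \ interior W)}) ≃ₜ
        ↥(D ×ˢ (W \ interior W)),
      ∀ p : ↥(V ∩ {p | (p.1, p.2.2) ∈ D ×ˢ (W \ interior W)}),
        (h p : EuclideanSpace ℝ (Fin (m + 1)) × EuclideanSpace ℝ (Fin (m + 1))) =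
          ((p : EuclideanSpace ℝ (Fin (m + 1)) ×
            EuclideanSpace ℝ (Fin (m + 1)) × EuclideanSpace ℝ (Fin (m + 1))).1,
           (p : EuclideanSpace ℝ (Fin (m + 1)) ×
            EuclideanSpace ℝ (Fin (m + 1)) × EuclideanSpace ℝ (Fin (m + 1))).2.2) := by
  subst hS₁ hV
  have hne : ∀ q ∈ D ×ˢ (W \ interior W), q.1 ≠ q.2 := fun q hq heq =>
    hq.2.2 (heq ▸ hD hq.1)
  refine exists_homeomorph_of_isGraph (f := unitDirection)
    (fun q hq => (continuousAt_unitDirection (hne q hq)).continuousWithinAt) ?_ ?_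
  · rintro p ⟨⟨hpS, -⟩, hpB⟩
    refine ⟨hpB, eq_of_mem_closure_of_eqOn (f := fun r => r.2.1)
      (g := fun r => unitDirection (r.1, r.2.2)) (fun r hr => hr.2.2.2.2) hpS (by fun_prop) ?_⟩
    exact continuousAt_fst.unitDirection continuousAt_snd.snd (hne (p.1, p.2.2) hpB)
  · intro q hq
    have hv : q.1 ∈ W := interior_subset (hD hq.1)
    have hx := norm_unitDirection (hne q hq)
    refine ⟨⟨subset_closure ⟨hv, by simpa using hx, hq.2, hne q hq, rfl⟩, hv, by simpa using hx,
      hq.2⟩, hq⟩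

/-- With `V` the closure in `W × S^m × ∂W` of
`{(v,x,w) : v ≠ w, x = (w - v)/‖w - v‖}`, `p : V → W × ∂W` the projection
`(v,x,w) ↦ (v,w)`, and `D ⊆ W°` compact, the restriction of `p` to
`p⁻¹(D × ∂W)` is a homeomorphism onto `D × ∂W`. -/
theorem stmt5 (m : ℕ) (hm : 1 ≤ m)
    (W : Set (EuclideanSpace ℝ (Fin (m + 1))))
    (hWcpt : IsCompact W)
    (D : Set (EuclideanSpace ℝ (Fin (m + 1))))
    (hDcpt : IsCompact D) (hD : D ⊆ interior W)
    (S₁ V : Set (EuclideanSpace ℝ (Fin (m + 1)) ×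
      EuclideanSpace ℝ (Fin (m + 1)) × EuclideanSpace ℝ (Fin (m + 1))))
    (hS₁ : S₁ = {p | p.1 ∈ W ∧
      p.2.1 ∈ Metric.sphere (0 : EuclideanSpace ℝ (Fin (m + 1))) 1 ∧
      p.2.2 ∈ W \ interior W ∧ p.1 ≠ p.2.2 ∧
      p.2.1 = ‖p.2.2 - p.1‖⁻¹ • (p.2.2 - p.1)})
    (hV : V = closure S₁ ∩
      {p | p.1 ∈ W ∧ p.2.1 ∈ Metric.sphere (0 : EuclideanSpace ℝ (Fin (m + 1))) 1 ∧
        p.2.2 ∈ W \ interior W}) :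
    ∃ h : ↥(V ∩ {p | (p.1, p.2.2) ∈ D ×ˢ (W \ interior W)}) ≃ₜ
        ↥(D ×ˢ (W \ interior W)),
      ∀ p : ↥(V ∩ {p | (p.1, p.2.2) ∈ D ×ˢ (W \ interior W)}),
        (h p : EuclideanSpace ℝ (Fin (m + 1)) × EuclideanSpace ℝ (Fin (m + 1))) =
          ((p : EuclideanSpace ℝ (Fin (m + 1)) ×
            EuclideanSpace ℝ (Fin (m + 1)) × EuclideanSpace ℝ (Fin (m + 1))).1,
           (p : EuclideanSpace ℝ (Fin (m + 1)) ×
            EuclideanSpace ℝ (Fin (m + 1)) × EuclideanSpace ℝ (Fin (m + 1))).2.2) :=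
  stmt5_general m W D hD S₁ V hS₁ hV
end

section
/- Let m ≥ 1 and let W and E be compact Hausdorff topological spaces. Let τ be the coordinate-switching involution on (W × S^m × E) × (W × S^m × E) and q the quotient map onto ((W × S^m × E) × (W × S^m × E))/τ. Define the anti-diagonal A := q({((w,x,e), (w,−x,e)) : w ∈ W, x ∈ S^m, e ∈ E}), equipped with the subspace topology. Then A is homeomorphic to W × (S^m/∼) × E, where S^m/∼ is the quotient of S^m by the antipodal identification x ∼ −x (i.e. real projective m-space); moreover the homeomorphism can be chosen to commute with the natural projections of both spaces to W × E. -/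
/-!
The map `(w, x, e) ↦ q((w, x, e), (w, -x, e))` from `W × S^m × E` identifies exactly the
antipodal pairs `(w, ±x, e)`, so it induces a continuous bijection from the compact space
`W × ℝP^m × E` onto `A`. Both quotients involved are quotients by a continuous involution, hence
open quotient maps: this makes the induced map continuous, and makes the symmetric square
Hausdorff, since its relation is the union of two closed graphs. A continuous bijection from a
compact space to a Hausdorff space is a homeomorphism.
-/

/-- The relation on `Z × Z` identifying a pair with its coordinate swap;
quotienting by it gives the symmetric square `(Z × Z)/τ`. -/
def swapRel (Z : Type*) : Z × Z → Z × Z → Prop :=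
  fun p q => q = p ∨ q = Prod.swap p

open Function Metric Topology

section InvolutionQuotient

variable {X : Type*} {r : X → X → Prop} {σ : X → X}

theorem quot_mk_eq_mk_iff_of_involutive (hσ : Involutive σ)
    (hr : ∀ a b, r a b ↔ b = a ∨ b = σ a) {a b : X} :
    Quot.mk r a = Quot.mk r b ↔ b = a ∨ b = σ a := by
  have hequiv : Equivalence r := by
    refine ⟨fun a => (hr a a).2 (Or.inl rfl), fun {a b} hab => ?_, fun {a b c} hab hbc => ?_⟩
    · rcases (hr a b).1 hab with rfl | rfl
      · exact (hr _ _).2 (Or.inl rfl)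
      · exact (hr _ _).2 (Or.inr (hσ a).symm)
    · rcases (hr a b).1 hab with rfl | rfl <;> rcases (hr _ c).1 hbc with rfl | rfl
      · exact (hr _ _).2 (Or.inl rfl)
      · exact (hr _ _).2 (Or.inr rfl)
      · exact (hr _ _).2 (Or.inr rfl)
      · exact (hr _ _).2 (Or.inl (hσ a))
  rw [Quot.eq, hequiv.eqvGen_iff, hr]

variable [TopologicalSpace X]

theorem isOpenQuotientMap_quot_mk_of_involutive (hσ : Involutive σ) (hσc : Continuous σ)
    (hr : ∀ a b, r a b ↔ b = a ∨ b = σ a) : IsOpenQuotientMap (Quot.mk r) := by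
  refine ⟨Quot.mk_surjective, continuous_quot_mk, fun U hU => ?_⟩
  rw [← isQuotientMap_quot_mk.isOpen_preimage]
  have hsat : Quot.mk r ⁻¹' (Quot.mk r '' U) = U ∪ σ ⁻¹' U := by
    ext x
    simp only [Set.mem_preimage, Set.mem_image, quot_mk_eq_mk_iff_of_involutive hσ hr,
      Set.mem_union]
    constructor
    · rintro ⟨u, hu, rfl | rfl⟩
      · exact Or.inl hu
      · exact Or.inr ((hσ u).symm ▸ hu)
    · rintro (hx | hx)
      · exact ⟨x, hx, Or.inl rfl⟩
      · exact ⟨σ x, hx, Or.inr (hσ x).symm⟩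
  exact hsat ▸ hU.union (hU.preimage hσc)

theorem t2Space_quot_of_involutive [T2Space X] (hσ : Involutive σ) (hσc : Continuous σ)
    (hr : ∀ a b, r a b ↔ b = a ∨ b = σ a) : T2Space (Quot r) := by
  rw [t2Space_iff_of_isOpenQuotientMap (isOpenQuotientMap_quot_mk_of_involutive hσ hσc hr)]
  simp only [quot_mk_eq_mk_iff_of_involutive hσ hr, Set.ofPred_or]
  exact (isClosed_eq continuous_snd continuous_fst).union
    (isClosed_eq continuous_snd (hσc.comp continuous_fst))

end InvolutionQuotient

theorem swapRel_iff {Z : Type*} (p q : Z × Z) : swapRel Z p q ↔ q = p ∨ q = p.swap := Iff.rfl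

instance {Z : Type*} [TopologicalSpace Z] [T2Space Z] : T2Space (Quot (swapRel Z)) :=
  t2Space_quot_of_involutive Prod.swap_swap continuous_swap swapRel_iff

section Antidiagonal

variable {F : Type*} [NormedAddCommGroup F] {ρ : ℝ} (W E : Type*)

def antipodalRel (F : Type*) [NormedAddCommGroup F] (ρ : ℝ) :
    sphere (0 : F) ρ → sphere (0 : F) ρ → Prop :=
  fun a b => (b : F) = a ∨ (b : F) = -(a : F)

theorem antipodalRel_iff (a b : sphere (0 : F) ρ) : antipodalRel F ρ a b ↔ b = a ∨ b = -a := by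
  simp only [antipodalRel, Subtype.ext_iff, coe_neg_sphere]

def antidiagonalMap (p : W × Quot (antipodalRel F ρ) × E) : Quot (swapRel (W × F × E)) :=
  Quot.lift (fun x : sphere (0 : F) ρ => Quot.mk _ ((p.1, (x : F), p.2.2), (p.1, -(x : F), p.2.2)))
    (fun a b hab => by
      rcases hab with hab | hab
      · simp only [hab]
      · simp only [hab, neg_neg]
        exact Quot.sound (Or.inr rfl))
    p.2.1

variable {W E}

@[simp]
theorem antidiagonalMap_mk (w : W) (x : sphere (0 : F) ρ) (e : E) :
    antidiagonalMap W E (w, Quot.mk _ x, e) =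
      Quot.mk _ ((w, (x : F), e), (w, -(x : F), e)) :=
  rfl

theorem antidiagonalMap_injective : Injective (antidiagonalMap (F := F) (ρ := ρ) W E) := by
  rintro ⟨w, ⟨x⟩, e⟩ ⟨w', ⟨x'⟩, e'⟩ h
  simp only [antidiagonalMap_mk, quot_mk_eq_mk_iff_of_involutive Prod.swap_swap swapRel_iff,
    Prod.swap_prod_mk, Prod.mk.injEq] at h
  rcases h with ⟨⟨rfl, hx, rfl⟩, -⟩ | ⟨⟨rfl, hx, rfl⟩, -⟩
  · exact congrArg _ (congrArg₂ Prod.mk (Quot.sound (Or.inl hx)) rfl)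
  · exact congrArg _ (congrArg₂ Prod.mk (Quot.sound (Or.inr hx)) rfl)

theorem range_antidiagonalMap :
    Set.range (antidiagonalMap (F := F) (ρ := ρ) W E) = Quot.mk _ ''
      {p | ∃ (w : W) (x : F) (e : E), x ∈ sphere (0 : F) ρ ∧ p = ((w, x, e), (w, -x, e))} := by
  ext z
  constructor
  · rintro ⟨⟨w, ⟨x⟩, e⟩, rfl⟩
    exact ⟨_, ⟨w, x, e, x.2, rfl⟩, rfl⟩
  · rintro ⟨_, ⟨w, x, e, hx, rfl⟩, rfl⟩
    exact ⟨(w, Quot.mk _ ⟨x, hx⟩, e), rfl⟩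

theorem antidiagonalMap_eq_mk {p : W × Quot (antipodalRel F ρ) × E} {z₁ z₂ : W × F × E}
    (h : antidiagonalMap W E p = Quot.mk _ (z₁, z₂)) : p.1 = z₁.1 ∧ p.2.2 = z₁.2.2 := by
  obtain ⟨w, ⟨x⟩, e⟩ := p
  rw [antidiagonalMap_mk, quot_mk_eq_mk_iff_of_involutive Prod.swap_swap swapRel_iff] at h
  rcases h with h | h <;> obtain ⟨rfl, -⟩ := Prod.mk.inj h <;> exact ⟨rfl, rfl⟩

variable [TopologicalSpace W] [TopologicalSpace E]

theorem continuous_antidiagonalMap : Continuous (antidiagonalMap (F := F) (ρ := ρ) W E) := by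
  have hq : IsOpenQuotientMap
      (Prod.map id (Prod.map (Quot.mk (antipodalRel F ρ)) id) : W × sphere (0 : F) ρ × E → _) :=
    IsOpenQuotientMap.id.prodMap
      ((isOpenQuotientMap_quot_mk_of_involutive neg_neg continuous_neg antipodalRel_iff).prodMap
        IsOpenQuotientMap.id)
  rw [hq.isQuotientMap.continuous_iff]
  exact continuous_quot_mk.comp (by fun_prop)

theorem exists_homeomorph_range_antidiagonalMap [CompactSpace W] [T2Space W] [CompactSpace E]
    [T2Space E] [ProperSpace F] :
    ∃ h : Set.range (antidiagonalMap (F := F) (ρ := ρ) W E) ≃ₜ W × Quot (antipodalRel F ρ) × E,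
      ∀ (a : Set.range (antidiagonalMap (F := F) (ρ := ρ) W E)) (z₁ z₂ : W × F × E),
        Quot.mk _ (z₁, z₂) = (a : Quot (swapRel (W × F × E))) →
        (h a).1 = z₁.1 ∧ (h a).2.2 = z₁.2.2 := by
  let h := ((continuous_antidiagonalMap (F := F) (ρ := ρ) (W := W) (E := E)).isClosedEmbedding
    antidiagonalMap_injective).isEmbedding.toHomeomorph
  refine ⟨h.symm, fun a z₁ z₂ hz => ?_⟩
  obtain ⟨p, rfl⟩ := h.surjective a
  rw [h.symm_apply_apply]
  exact antidiagonalMap_eq_mk hz.symm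

end Antidiagonal

theorem stmt7_general (m : ℕ)
    (W E : Type*) [TopologicalSpace W] [CompactSpace W] [T2Space W]
    [TopologicalSpace E] [CompactSpace E] [T2Space E]
    (A : Set (Quot (swapRel (W × EuclideanSpace ℝ (Fin (m + 1)) × E))))
    (hA : A = Quot.mk (swapRel (W × EuclideanSpace ℝ (Fin (m + 1)) × E)) ''
      {p | ∃ (w : W) (x : EuclideanSpace ℝ (Fin (m + 1))) (e : E),
        x ∈ Metric.sphere (0 : EuclideanSpace ℝ (Fin (m + 1))) 1 ∧
        p = ((w, x, e), (w, -x, e))}) :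
    ∃ h : ↥A ≃ₜ
        W × Quot (fun a b : ↥(Metric.sphere (0 : EuclideanSpace ℝ (Fin (m + 1))) 1) =>
          (b : EuclideanSpace ℝ (Fin (m + 1))) = (a : EuclideanSpace ℝ (Fin (m + 1))) ∨
          (b : EuclideanSpace ℝ (Fin (m + 1))) = -(a : EuclideanSpace ℝ (Fin (m + 1)))) × E,
      ∀ (a : ↥A) (z₁ z₂ : W × EuclideanSpace ℝ (Fin (m + 1)) × E),
        Quot.mk (swapRel (W × EuclideanSpace ℝ (Fin (m + 1)) × E)) (z₁, z₂) = (a : _) →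
          (h a).1 = z₁.1 ∧ (h a).2.2 = z₁.2.2 := by
  subst hA
  rw [← range_antidiagonalMap]
  exact exists_homeomorph_range_antidiagonalMap (F := EuclideanSpace ℝ (Fin (m + 1))) (ρ := 1)

/-- The anti-diagonal `A = q({((w,x,e),(w,-x,e))})` inside
`((W × S^m × E) × (W × S^m × E))/τ` is homeomorphic to `W × (S^m/±) × E`
(with `S^m/±` real projective `m`-space), via a homeomorphism commuting with
the projections of both spaces to `W × E`. -/
theorem stmt7 (m : ℕ) (hm : 1 ≤ m)
    (W E : Type*) [TopologicalSpace W] [CompactSpace W] [T2Space W]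
    [TopologicalSpace E] [CompactSpace E] [T2Space E]
    (A : Set (Quot (swapRel (W × EuclideanSpace ℝ (Fin (m + 1)) × E))))
    (hA : A = Quot.mk (swapRel (W × EuclideanSpace ℝ (Fin (m + 1)) × E)) ''
      {p | ∃ (w : W) (x : EuclideanSpace ℝ (Fin (m + 1))) (e : E),
        x ∈ Metric.sphere (0 : EuclideanSpace ℝ (Fin (m + 1))) 1 ∧
        p = ((w, x, e), (w, -x, e))}) :
    ∃ h : ↥A ≃ₜ
        W × Quot (fun a b : ↥(Metric.sphere (0 : EuclideanSpace ℝ (Fin (m + 1))) 1) =>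
          (b : EuclideanSpace ℝ (Fin (m + 1))) = (a : EuclideanSpace ℝ (Fin (m + 1))) ∨
          (b : EuclideanSpace ℝ (Fin (m + 1))) = -(a : EuclideanSpace ℝ (Fin (m + 1)))) × E,
      ∀ (a : ↥A) (z₁ z₂ : W × EuclideanSpace ℝ (Fin (m + 1)) × E),
        Quot.mk (swapRel (W × EuclideanSpace ℝ (Fin (m + 1)) × E)) (z₁, z₂) = (a : _) →
          (h a).1 = z₁.1 ∧ (h a).2.2 = z₁.2.2 :=
  stmt7_general m W E A hA
end

section
/- Let Z be a topological space, τ the coordinate-switching involution on Z × Z, and q : Z × Z → (Z × Z)/τ the quotient map. For a compact pair (P,Q) in Z (i.e. Q ⊆ P ⊆ Z with P, Q compact), define P^s := q(P × P) and ∂^s(P,Q) := q(Δ_P ∪ (Q × P) ∪ (P × Q)), where Δ_P := {(p,p) : p ∈ P}. Say that a compact pair (Y,B) is admissible for a compact pair (X,A) if X ∩ (Y ∖ B) is contained in X ∖ A and is a relatively open subset of X ∖ A. If (Y,B) is admissible for (X,A), then the pair (Y^s, ∂^s(Y,B)) is admissible for the pair (X^s, ∂^s(X,A)); that is, X^s ∩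 (Y^s ∖ ∂^s(Y,B)) is contained in X^s ∖ ∂^s(X,A) and is a relatively open subset of X^s ∖ ∂^s(X,A). -/
/-- `P^s := q(P × P)`, the symmetric square of `P` in `(Z × Z)/τ`. -/
def symSq {Z : Type*} (P : Set Z) : Set (Quot (swapRel Z)) :=
  Quot.mk (swapRel Z) '' (P ×ˢ P)

/-- `∂^s(P,Q) := q(Δ_P ∪ (Q × P) ∪ (P × Q))`, the "boundary" part of the
symmetric square of the pair `(P,Q)`. -/
def symBd {Z : Type*} (P Q : Set Z) : Set (Quot (swapRel Z)) :=
  Quot.mk (swapRel Z) '' ({p : Z × Z | p.1 ∈ P ∧ p.1 = p.2} ∪ Q ×ˢ P ∪ P ×ˢ Q)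

/-- `(Y,B)` is admissible for `(X,A)`: `X ∩ (Y ∖ B)` is contained in `X ∖ A`
and is a relatively open subset of `X ∖ A`. -/
def Admissible {γ : Type*} [TopologicalSpace γ] (X A Y B : Set γ) : Prop :=
  X ∩ (Y \ B) ⊆ X \ A ∧ ∃ U : Set γ, IsOpen U ∧ X ∩ (Y \ B) = (X \ A) ∩ U

open Set

theorem prod_self_inter_offDiag {α : Type*} (s t : Set α) :
    s ×ˢ s ∩ t.offDiag = (s ∩ t).offDiag := by
  ext ⟨a, b⟩
  simp only [mem_inter_iff, mem_prod, mem_offDiag]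
  tauto

section SymmetricSquare

variable {Z : Type*}

theorem eq_or_eq_swap_of_eqvGen_swapRel {a b : Z × Z}
    (h : Relation.EqvGen (swapRel Z) a b) : b = a ∨ b = a.swap := by
  induction h with
  | rel _ _ h => exact h
  | refl => exact Or.inl rfl
  | symm _ _ _ ih => rcases ih with rfl | rfl <;> simp
  | trans _ _ _ _ _ ih₁ ih₂ => rcases ih₁ with rfl | rfl <;> rcases ih₂ with rfl | rfl <;> simp

theorem preimage_image_quot_mk_swapRel {S : Set (Z × Z)} (hS : MapsTo Prod.swap S S) :
    Quot.mk (swapRel Z) ⁻¹' (Quot.mk (swapRel Z) '' S) = S := by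
  refine Subset.antisymm ?_ (subset_preimage_image _ _)
  rintro p ⟨s, hs, hsp⟩
  rcases eq_or_eq_swap_of_eqvGen_swapRel (Quot.eq.mp hsp) with rfl | rfl
  exacts [hs, hS hs]

theorem preimage_symSq (P : Set Z) : Quot.mk (swapRel Z) ⁻¹' symSq P = P ×ˢ P :=
  preimage_image_quot_mk_swapRel fun _ h => ⟨h.2, h.1⟩

theorem preimage_symBd (P Q : Set Z) :
    Quot.mk (swapRel Z) ⁻¹' symBd P Q = {p : Z × Z | p.1 ∈ P ∧ p.1 = p.2} ∪ Q ×ˢ P ∪ P ×ˢ Q := by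
  refine preimage_image_quot_mk_swapRel ?_
  rintro ⟨a, b⟩ ((⟨ha, hab⟩ | ⟨ha, hb⟩) | ⟨ha, hb⟩)
  · obtain rfl : a = b := hab
    exact Or.inl (Or.inl ⟨ha, rfl⟩)
  · exact Or.inr ⟨hb, ha⟩
  · exact Or.inl (Or.inr ⟨hb, ha⟩)

theorem preimage_symSq_diff_symBd (P Q : Set Z) :
    Quot.mk (swapRel Z) ⁻¹' (symSq P \ symBd P Q) = (P \ Q).offDiag := by
  rw [preimage_sdiff, preimage_symSq, preimage_symBd]
  ext ⟨a, b⟩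
  simp only [mem_sdiff, mem_prod, mem_union, mem_ofPred_eq, mem_offDiag]
  tauto

end SymmetricSquare

theorem stmt9_general (Z : Type*) [TopologicalSpace Z]
    (X A Y B : Set Z)
    (hadm : Admissible X A Y B) :
    Admissible (symSq X) (symBd X A) (symSq Y) (symBd Y B) := by
  obtain ⟨hsub, U, hU, hE⟩ := hadm
  have hq : Function.Surjective (Quot.mk (swapRel Z)) := Quot.mk_surjective
  have hpull : Quot.mk (swapRel Z) ⁻¹' (symSq X ∩ (symSq Y \ symBd Y B)) =
      (X ∩ (Y \ B)).offDiag := by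
    rw [preimage_inter, preimage_symSq, preimage_symSq_diff_symBd, prod_self_inter_offDiag]
  refine ⟨?_, symSq U, ?_, ?_⟩
  · rw [← hq.preimage_subset_preimage_iff, hpull, preimage_symSq_diff_symBd]
    exact offDiag_mono hsub
  · rw [← isQuotientMap_quot_mk.isOpen_preimage, preimage_symSq]
    exact hU.prod hU
  · apply hq.preimage_injective
    rw [hpull, preimage_inter, preimage_symSq_diff_symBd, preimage_symSq, hE,
      inter_comm (X \ A).offDiag, prod_self_inter_offDiag, inter_comm U]

/-- If the compact pair `(Y,B)` is admissible for the compact pair `(X,A)` in `Z`,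
then `(Y^s, ∂^s(Y,B))` is admissible for `(X^s, ∂^s(X,A))` in `(Z × Z)/τ`. -/
theorem stmt9 (Z : Type*) [TopologicalSpace Z]
    (X A Y B : Set Z)
    (hAX : A ⊆ X) (hBY : B ⊆ Y)
    (hX : IsCompact X) (hA : IsCompact A) (hY : IsCompact Y) (hB : IsCompact B)
    (hadm : Admissible X A Y B) :
    Admissible (symSq X) (symBd X A) (symSq Y) (symBd Y B) :=
  stmt9_general Z X A Y B hadm
end
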